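/- Every subgroup of a finite group G that attains the maximum Chermak–Delgado measure is subnormal in G. -/

import Mathlib

/-- The Chermak–Delgado measure of a subgroup. -/
noncomputable def cdMeasure {G : Type*} [Group G] (H : Subgroup G) : ℕ :=
  Nat.card H * Nat.card (Subgroup.centralizer (H : Set G))

/-- A subgroup `H` of `G` is subnormal if there is a chain
`H = K₀ ◁ K₁ ◁ ⋯ ◁ Kₙ = G` with each term normal in the next. -/
def IsSubnormal {G : Type*} [Group G] (H : Subgroup G) : Prop :=
  ∃ (n : ℕ) (c : Fin (n + 1) → Subgroup G),
    c 0 = H ∧ c (Fin.last n) = ⊤ ∧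
    ∀ i : Fin n, (c i.castSucc ≤ c i.succ) ∧
      ((c i.castSucc).subgroupOf (c i.succ)).Normal

/-!
The set `CD(G)` is closed under conjugation, under centralizers (`H ≤ C(C(H))`) and under joins:
the measure is supermodular, `m(A) m(B) ≤ m(A ⊔ B) m(A ⊓ B)`, since this holds separately for the
orders of the subgroups and of their centralizers. Induct on `|G|` and, inside `G`, downwards on
`H ∈ CD(G)`. If `C(H) ⊄ H`, then `H` is normal in the larger member `H ⊔ C(H)`. Otherwise, if `H`
is not normal, pick `g` with `Hᵍ ⊄ H`. The member `K = H ⊔ Hᵍ` is larger than `H`, and equality in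
the order part of supermodularity forces `K = Hᵍ H`, so `K ≠ G` (else `g ∈ H`). As
`C(H) ≤ H ≤ K`, `H` lies in `CD(K)`, so it is subnormal in the smaller group `K`, which is
subnormal in `G`.
-/

namespace Subgroup

variable {G : Type*} [Group G]

lemma card_mul_relIndex {A B : Subgroup G} (h : A ≤ B) :
    Nat.card A * A.relIndex B = Nat.card B := by
  simpa [relIndex_bot_left] using relIndex_mul_relIndex ⊥ A B bot_le h

lemma centralizer_inf_le_centralizer_sup (A B : Subgroup G) :
    centralizer (A : Set G) ⊓ centralizer (B : Set G) ≤
      centralizer ((A ⊔ B : Subgroup G) : Set G) :=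
  le_centralizer_iff.mp (sup_le (le_centralizer_iff.mp inf_le_left)
    (le_centralizer_iff.mp inf_le_right))

lemma centralizer_sup_le_centralizer_inf (A B : Subgroup G) :
    centralizer (A : Set G) ⊔ centralizer (B : Set G) ≤
      centralizer ((A ⊓ B : Subgroup G) : Set G) :=
  sup_le (centralizer_le inf_le_left) (centralizer_le inf_le_right)

lemma normal_subgroupOf_sup_centralizer (H : Subgroup G) :
    (H.subgroupOf (H ⊔ centralizer (H : Set G))).Normal :=
  (normal_subgroupOf_iff_le_normalizer le_sup_left).mpr
    (sup_le le_normalizer (centralizer_le_normalizer _))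

variable [Finite G]

lemma card_mul_card_le_card_sup_mul_card_inf (A B : Subgroup G) :
    Nat.card A * Nat.card B ≤ Nat.card ↥(A ⊔ B) * Nat.card ↥(A ⊓ B) :=
  calc Nat.card A * Nat.card B = Nat.card A * A.relIndex B * Nat.card ↥(A ⊓ B) := by
        rw [← card_mul_relIndex (inf_le_right : A ⊓ B ≤ B), inf_relIndex_right]; ring
    _ ≤ Nat.card A * A.relIndex (A ⊔ B) * Nat.card ↥(A ⊓ B) := by
        gcongr; exact relIndex_le_of_le_right le_sup_right index_ne_zero_of_finite
    _ = Nat.card ↥(A ⊔ B) * Nat.card ↥(A ⊓ B) := by rw [card_mul_relIndex le_sup_left]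

lemma card_centralizer_mul_card_centralizer_le (A B : Subgroup G) :
    Nat.card (centralizer (A : Set G)) * Nat.card (centralizer (B : Set G)) ≤
      Nat.card (centralizer ((A ⊔ B : Subgroup G) : Set G)) *
        Nat.card (centralizer ((A ⊓ B : Subgroup G) : Set G)) :=
  (card_mul_card_le_card_sup_mul_card_inf _ _).trans <| by
    rw [mul_comm]
    exact Nat.mul_le_mul (card_le_of_le (centralizer_inf_le_centralizer_sup A B))
      (card_le_of_le (centralizer_sup_le_centralizer_inf A B))

lemma exists_mul_eq_of_card_sup_mul_card_inf_eq {A B : Subgroup G}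
    (h : Nat.card ↥(A ⊔ B) * Nat.card ↥(A ⊓ B) = Nat.card A * Nat.card B)
    {x : G} (hx : x ∈ A ⊔ B) : ∃ b ∈ B, ∃ a ∈ A, b * a = x := by
  have hrel : A.relIndex (A ⊔ B) = A.relIndex B := by
    rw [← card_mul_relIndex (le_sup_left : A ≤ A ⊔ B),
      ← card_mul_relIndex (inf_le_right : A ⊓ B ≤ B), inf_relIndex_right] at h
    have hpos : 0 < Nat.card A * Nat.card ↥(A ⊓ B) := Nat.mul_pos Nat.card_pos Nat.card_pos
    exact Nat.eq_of_mul_eq_mul_left hpos (by linarith)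
  -- so the embedding `B ⧸ (A ⊓ B) ↪ (A ⊔ B) ⧸ A` of left cosets is onto
  let f := quotientSubgroupOfEmbeddingOfLE A (le_sup_right : B ≤ A ⊔ B)
  obtain ⟨q, hq⟩ := (f.injective.bijective_of_nat_card_le hrel.le).surjective
    (QuotientGroup.mk ⟨x, hx⟩)
  induction q using QuotientGroup.induction_on with
  | H b =>
    rw [quotientSubgroupOfEmbeddingOfLE_apply_mk, QuotientGroup.eq, mem_subgroupOf] at hq
    exact ⟨b, b.2, _, hq, by simp⟩

lemma sup_map_conj_ne_top {H : Subgroup G} {g : G}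
    (hcard : Nat.card ↥(H ⊔ H.map (MulAut.conj g : G →* G)) *
        Nat.card ↥(H ⊓ H.map (MulAut.conj g : G →* G)) =
      Nat.card H * Nat.card (H.map (MulAut.conj g : G →* G)))
    (hg : ¬ H.map (MulAut.conj g : G →* G) ≤ H) :
    H ⊔ H.map (MulAut.conj g : G →* G) ≠ ⊤ := by
  intro htop
  obtain ⟨-, ⟨h, hh, rfl⟩, a, ha, hha⟩ :=
    exists_mul_eq_of_card_sup_mul_card_inf_eq hcard (htop ▸ mem_top g)
  have hgH : g ∈ H := by
    have : a = g * h⁻¹ := by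
      rw [eq_inv_mul_of_mul_eq hha]
      simp [MulAut.conj_apply, mul_assoc]
    simpa [this] using mul_mem ha hh
  exact hg (mem_normalizer_iff_map_conj_eq.mp (le_normalizer hgH)).le

end Subgroup

section ChermakDelgado

open Subgroup

variable {G : Type*} [Group G]

/-- Membership in the set `CD(G)` of subgroups of maximal Chermak–Delgado measure. -/
def IsCDSubgroup (H : Subgroup G) : Prop :=
  ∀ K : Subgroup G, cdMeasure K ≤ cdMeasure H

lemma cdMeasure_pos [Finite G] (H : Subgroup G) : 0 < cdMeasure H :=
  Nat.mul_pos Nat.card_pos Nat.card_pos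

lemma cdMeasure_le_cdMeasure_centralizer [Finite G] (H : Subgroup G) :
    cdMeasure H ≤ cdMeasure (centralizer (H : Set G)) := by
  rw [cdMeasure, cdMeasure, mul_comm]
  exact Nat.mul_le_mul_left _ (card_le_of_le (le_centralizer_iff.mpr le_rfl))

lemma cdMeasure_le_cdMeasure_map {G' : Type*} [Group G'] [Finite G'] {f : G →* G'}
    (hf : Function.Injective f) (H : Subgroup G) : cdMeasure H ≤ cdMeasure (H.map f) := by
  rw [cdMeasure, cdMeasure, card_map_of_injective hf,
    ← card_map_of_injective (K := centralizer _) hf]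
  exact Nat.mul_le_mul_left _ (card_le_of_le (by
    simpa only [coe_map] using map_centralizer_le_centralizer_image (H : Set G) f))

lemma cdMeasure_le_cdMeasure_subgroupOf [Finite G] {H K : Subgroup G} (hHK : H ≤ K)
    (hCK : centralizer (H : Set G) ≤ K) : cdMeasure H ≤ cdMeasure (H.subgroupOf K) := by
  rw [cdMeasure, cdMeasure, Nat.card_congr (subgroupOfEquivOfLe hHK).toEquiv,
    ← Nat.card_congr (subgroupOfEquivOfLe hCK).toEquiv]
  refine Nat.mul_le_mul_left _ (card_le_of_le fun x hx y hy => Subtype.ext ?_)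
  exact mem_subgroupOf.mp hx y (mem_subgroupOf.mp hy)

lemma cdMeasure_mul_cdMeasure (A B : Subgroup G) :
    cdMeasure A * cdMeasure B = (Nat.card A * Nat.card B) *
      (Nat.card (centralizer (A : Set G)) * Nat.card (centralizer (B : Set G))) :=
  mul_mul_mul_comm ..

lemma cdMeasure_mul_cdMeasure_le [Finite G] (A B : Subgroup G) :
    cdMeasure A * cdMeasure B ≤ cdMeasure (A ⊔ B) * cdMeasure (A ⊓ B) := by
  rw [cdMeasure_mul_cdMeasure, cdMeasure_mul_cdMeasure]
  exact Nat.mul_le_mul (card_mul_card_le_card_sup_mul_card_inf A B)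
    (card_centralizer_mul_card_centralizer_le A B)

namespace IsCDSubgroup

variable [Finite G] {H A B : Subgroup G}

lemma cdMeasure_mul_cdMeasure_eq (hA : IsCDSubgroup A) (hB : IsCDSubgroup B) :
    cdMeasure A * cdMeasure B = cdMeasure (A ⊔ B) * cdMeasure (A ⊓ B) :=
  le_antisymm (cdMeasure_mul_cdMeasure_le A B) (Nat.mul_le_mul (hA _) (hB _))

lemma sup (hA : IsCDSubgroup A) (hB : IsCDSubgroup B) : IsCDSubgroup (A ⊔ B) := by
  have h := hA.cdMeasure_mul_cdMeasure_eq hB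
  rw [le_antisymm (hA B) (hB A)] at h
  obtain ⟨hsup, -⟩ := (mul_eq_mul_iff_eq_and_eq_of_pos (hA (A ⊔ B)) (hA (A ⊓ B))
    (cdMeasure_pos _) (cdMeasure_pos _)).mp h.symm
  exact fun K => hsup ▸ hA K

lemma card_sup_mul_card_inf_eq (hA : IsCDSubgroup A) (hB : IsCDSubgroup B) :
    Nat.card ↥(A ⊔ B) * Nat.card ↥(A ⊓ B) = Nat.card A * Nat.card B := by
  have h := hA.cdMeasure_mul_cdMeasure_eq hB
  rw [cdMeasure_mul_cdMeasure, cdMeasure_mul_cdMeasure] at h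
  exact ((mul_eq_mul_iff_eq_and_eq_of_pos (card_mul_card_le_card_sup_mul_card_inf A B)
    (card_centralizer_mul_card_centralizer_le A B) (Nat.mul_pos Nat.card_pos Nat.card_pos)
    (Nat.mul_pos Nat.card_pos Nat.card_pos)).mp h).1.symm

lemma centralizer (hH : IsCDSubgroup H) : IsCDSubgroup (Subgroup.centralizer (H : Set G)) :=
  fun K => (hH K).trans (cdMeasure_le_cdMeasure_centralizer H)

lemma map_mulAut (hH : IsCDSubgroup H) (e : MulAut G) : IsCDSubgroup (H.map (e : G →* G)) :=
  fun K => (hH K).trans (cdMeasure_le_cdMeasure_map e.injective H)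

lemma subgroupOf (hH : IsCDSubgroup H) {K : Subgroup G} (hHK : H ≤ K)
    (hCK : Subgroup.centralizer (H : Set G) ≤ K) : IsCDSubgroup (H.subgroupOf K) := fun L =>
  calc cdMeasure L ≤ cdMeasure (L.map K.subtype) :=
        cdMeasure_le_cdMeasure_map K.subtype_injective L
    _ ≤ cdMeasure H := hH _
    _ ≤ cdMeasure (H.subgroupOf K) := cdMeasure_le_cdMeasure_subgroupOf hHK hCK

end IsCDSubgroup

theorem IsCDSubgroup.isSubnormal {G : Type*} [Group G] [Finite G] {H : Subgroup G}
    (hH : IsCDSubgroup H) : H.IsSubnormal := by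
  induction hG : Nat.card G using Nat.strong_induction_on generalizing G with
  | _ n ihG =>
  subst hG
  induction H using WellFoundedGT.induction with
  | _ H ihH =>
  by_cases hCH : Subgroup.centralizer (H : Set G) ≤ H
  · by_cases hN : H.Normal
    · exact hN.isSubnormal
    obtain ⟨g, hg⟩ : ∃ g : G, ¬ H.map (MulAut.conj g : G →* G) ≤ H := by
      by_contra! h
      exact hN ⟨fun n hn g => h g (mem_map_of_mem _ hn)⟩
    set K := H ⊔ H.map (MulAut.conj g : G →* G)
    have hHg := hH.map_mulAut (MulAut.conj g)
    have hHK : H < K := left_lt_sup.mpr hg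
    have hKG : K ≠ ⊤ := sup_map_conj_ne_top (hH.card_sup_mul_card_inf_eq hHg) hg
    have hKcard : Nat.card K < Nat.card G :=
      (card_le_card_group K).lt_of_ne (mt (eq_top_of_card_eq K) hKG)
    exact Subgroup.IsSubnormal.trans hHK.le
      (ihG _ hKcard (hH.subgroupOf hHK.le (hCH.trans hHK.le)) rfl) (ihH K hHK (hH.sup hHg))
  · exact .step H _ le_sup_left (ihH _ (left_lt_sup.mpr hCH) (hH.sup hH.centralizer))
      (normal_subgroupOf_sup_centralizer H)

end ChermakDelgado

lemma isSubnormal_of_subgroup_isSubnormal {G : Type*} [Group G] {H : Subgroup G}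
    (hH : H.IsSubnormal) : IsSubnormal H := by
  obtain ⟨n, f, hmono, hnormal, h0, hn⟩ := Subgroup.IsSubnormal.isSubnormal_iff.mp hH
  exact ⟨n, fun i => f i, h0, hn, fun i => ⟨hmono (Nat.le_succ _), hnormal i⟩⟩

theorem cd_max_subnormal
    (G : Type*) [Group G] [Finite G] (H : Subgroup G)
    (hmax : ∀ K : Subgroup G, cdMeasure K ≤ cdMeasure H) :
    IsSubnormal H :=
  isSubnormal_of_subgroup_isSubnormal (IsCDSubgroup.isSubnormal hmax)
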